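/- Let A be an S-noetherian commutative ring for a multiplicatively closed S ⊆ A, and Σ ⊆ A another multiplicatively closed subset. Then the localization A_Σ is S'-noetherian, where S' is the image of S in A_Σ. -/

import Mathlib

/-- A submodule `N` is `S`-finite if there is a finitely generated submodule `F ⊆ N`
and `s ∈ S` with `N • s ⊆ F`. -/
def SFin {A : Type*} [CommRing A] (S : Submonoid A) {M : Type*} [AddCommGroup M]
    [Module A M] (N : Submodule A M) : Prop :=
  ∃ F : Submodule A M, F.FG ∧ F ≤ N ∧ ∃ s ∈ S, ∀ x ∈ N, s • x ∈ F

/-- A module `M` is `S`-noetherian if every submodule is `S`-finite. -/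
def SNoeth {A : Type*} [CommRing A] (S : Submonoid A) (M : Type*) [AddCommGroup M]
    [Module A M] : Prop :=
  ∀ N : Submodule A M, SFin S N

/-! Every ideal `J` of `A_Σ` is extended from its contraction, `J = (J ∩ A) A_Σ`, and
extension along any ring map carries an `S`-finiteness witness `(F, s)` of `J ∩ A`
to the witness `(F A_Σ, g s)` of `J`. -/

section

variable {A B : Type*} [CommRing A] [CommRing B]

theorem Ideal.smul_map_mem_map {I F : Ideal A} {s : A} (hsF : ∀ a ∈ I, s • a ∈ F)
    (f : A →+* B) {x : B} (hx : x ∈ I.map f) : f s • x ∈ F.map f := by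
  let J : Ideal B := Submodule.comap (LinearMap.mulLeft B (f s)) (F.map f)
  have hIJ : I ≤ J.comap f := fun a ha ↦ by
    simpa [J, ← map_mul] using Ideal.mem_map_of_mem f (hsF a ha)
  exact Ideal.map_le_iff_le_comap.mpr hIJ hx

theorem SFin.map {S : Submonoid A} {I : Ideal A} (hI : SFin S I) (f : A →+* B) :
    SFin (S.map f) (Ideal.map f I) := by
  obtain ⟨F, hFfg, hFI, s, hs, hsF⟩ := hI
  exact ⟨Ideal.map f F, Ideal.FG.map hFfg f, Ideal.map_mono hFI, f s,
    Submonoid.mem_map_of_mem f hs, fun _ ↦ Ideal.smul_map_mem_map hsF f⟩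

theorem SNoeth.isLocalization [Algebra A B] {S : Submonoid A} (T : Submonoid A)
    [IsLocalization T B] (hA : SNoeth S A) : SNoeth (S.map (algebraMap A B)) B := by
  intro J
  rw [← IsLocalization.map_under T B J]
  exact (hA _).map _

end

theorem stmt17 {A : Type*} [CommRing A] (S T : Submonoid A) (hA : SNoeth S A) :
    SNoeth (S.map (algebraMap A (Localization T))) (Localization T) :=
  hA.isLocalization T
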